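/- arXiv:0706.2619 — 2 statements merged into one kernel-verified Lean document; each statement's English description precedes it below -/
import Mathlib

section
/- Let G be a game structure of imperfect information and H = Knw(G). The map h defined on Prefs(G) by h(ℓ0 σ0 ℓ1 … σ_{n-1} ℓ_n) = q0 σ0 q1 … σ_{n-1} q_n, where q_i = (K(γ⁻¹(ρ(i))), ℓ_i) and ρ(i) is the prefix up to ℓ_i, is well defined (i.e., h(ρ) ∈ Prefs(H) for every ρ ∈ Prefs(G)) and is a bijection from Prefs(G) onto Prefs(H). -/
open scoped ENNReal

/-- A game structure of imperfect information: states `L`, alphabet `A`,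
observations `O`.  The observation sets are nonempty and partition `L`. -/
structure GameStruct (L A O : Type) where
  init : L
  trans : L → A → L → Prop
  total : ∀ l a, ∃ l', trans l a l'
  obsSet : O → Set L
  obs_nonempty : ∀ o, (obsSet o).Nonempty
  obs_cover : ∀ l, ∃ o, l ∈ obsSet o
  obs_disjoint : ∀ o o' l, l ∈ obsSet o → l ∈ obsSet o' → o = o'

/-- A finite alternating sequence `l₀ a₀ l₁ … a_{n-1} l_n`. -/
inductive Pref (L A : Type) : Type where
  | first : L → Pref L A
  | snoc : Pref L A → A → L → Pref L A

namespace Pref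

variable {L A L' A' : Type}

def last : Pref L A → L
  | .first l => l
  | .snoc _ _ l => l

def start : Pref L A → L
  | .first l => l
  | .snoc ρ _ _ => ρ.start

def length : Pref L A → ℕ
  | .first _ => 1
  | .snoc ρ _ _ => ρ.length + 1

/-- All steps of the sequence are transitions of `Δ`. -/
def Steps (Δ : L → A → L → Prop) : Pref L A → Prop
  | .first _ => True
  | .snoc ρ a l => Steps Δ ρ ∧ Δ ρ.last a l

def map (f : L → L') (g : A → A') : Pref L A → Pref L' A'
  | .first l => .first (f l)
  | .snoc ρ a l => .snoc (map f g ρ) (g a) (f l)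

end Pref

namespace GameStruct

variable {L A O : Type}

/-- The unique observation of a state. -/
noncomputable def obsOf (G : GameStruct L A O) (l : L) : O := (G.obs_cover l).choose

/-- The set of prefixes of the game `G`. -/
def Prefs (G : GameStruct L A O) : Set (Pref L A) :=
  {ρ | ρ.start = G.init ∧ Pref.Steps G.trans ρ}

/-- The observation sequence `γ⁻¹(ρ)` of a prefix. -/
noncomputable def obsSeq (G : GameStruct L A O) (ρ : Pref L A) : Pref O A :=
  ρ.map G.obsOf id

def Post (G : GameStruct L A O) (a : A) (s : Set L) : Set L :=
  {l' | ∃ l ∈ s, G.trans l a l'}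

/-- The knowledge associated with a finite observation sequence. -/
noncomputable def K (G : GameStruct L A O) (τ : Pref O A) : Set L :=
  {l | ∃ ρ ∈ G.Prefs, G.obsSeq ρ = τ ∧ ρ.last = l}

/-- Observation-based deterministic Player-1 strategy. -/
def ObsBased (G : GameStruct L A O) (α : Pref L A → A) : Prop :=
  ∀ ρ ∈ G.Prefs, ∀ ρ' ∈ G.Prefs, G.obsSeq ρ = G.obsSeq ρ' → α ρ = α ρ'

/-- Deterministic Player-2 strategy (validity condition). -/
def IsStrat2 (G : GameStruct L A O) (β : Pref L A → A → L) : Prop :=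
  ∀ ρ ∈ G.Prefs, ∀ a, G.trans ρ.last a (β ρ a)

/-- Counting Player-2 strategy. -/
def Counting (G : GameStruct L A O) (β : Pref L A → A → L) : Prop :=
  ∀ ρ ∈ G.Prefs, ∀ ρ' ∈ G.Prefs,
    ρ.length = ρ'.length → ρ.last = ρ'.last → ∀ a, β ρ a = β ρ' a

end GameStruct

/-- The sequence of prefixes resulting from playing `α` against `β` from `s0`. -/
def outPrefGen {S A : Type} (s0 : S) (α : Pref S A → A) (β : Pref S A → A → S) : ℕ → Pref S A
  | 0 => .first s0
  | n + 1 =>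
      .snoc (outPrefGen s0 α β n) (α (outPrefGen s0 α β n))
        (β (outPrefGen s0 α β n) (α (outPrefGen s0 α β n)))

/-- The outcome play (state stream, letter stream) of `α` against `β` from `s0`. -/
def outcomeGen {S A : Type} (s0 : S) (α : Pref S A → A) (β : Pref S A → A → S) :
    (ℕ → S) × (ℕ → A) :=
  (fun n => (outPrefGen s0 α β n).last, fun n => α (outPrefGen s0 α β n))

namespace GameStruct

variable {L A O : Type}

/-- Transition relation `Δᴷ` of the knowledge-based subset construction `Gᴷ`. -/
def transK (G : GameStruct L A O) (s1 : Set L) (a : A) (s2 : Set L) : Prop :=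
  (∃ o, s2 = G.Post a s1 ∩ G.obsSet o) ∧ s2.Nonempty

/-- Prefixes of the game `Gᴷ` of perfect information. -/
def PrefsK (G : GameStruct L A O) : Set (Pref (Set L) A) :=
  {ρ | ρ.start = {G.init} ∧ Pref.Steps G.transK ρ}

/-- A cell `s` is reachable in `Gᴷ`. -/
def ReachableK (G : GameStruct L A O) (s : Set L) : Prop :=
  ∃ ρ ∈ G.PrefsK, ρ.last = s

open Classical in
/-- The unique observation `o` with `s ⊆ γ(o)` (when it exists). -/
noncomputable def obsK (G : GameStruct L A O) (s : Set L) : O :=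
  if h : ∃ o, s ⊆ G.obsSet o then h.choose else G.obsOf G.init

/-- Deterministic Player-2 strategy in `Gᴷ` (validity condition). -/
def IsStrat2K (G : GameStruct L A O) (β : Pref (Set L) A → A → Set L) : Prop :=
  ∀ ρ ∈ G.PrefsK, ∀ a, G.transK ρ.last a (β ρ a)

/-- Player 1 sure wins `G` for objective `φ ⊆ (O × Σ)^ω` with a deterministic
observation-based strategy. -/
def SureWinG (G : GameStruct L A O) (φ : Set ((ℕ → O) × (ℕ → A))) : Prop :=
  ∃ α : Pref L A → A, G.ObsBased α ∧
    ∀ β, G.IsStrat2 β →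
      ((fun n => G.obsOf ((outcomeGen G.init α β).1 n)), (outcomeGen G.init α β).2) ∈ φ

/-- Player 1 sure wins `Gᴷ` for objective `φ ⊆ (O × Σ)^ω` with a deterministic strategy. -/
def SureWinK (G : GameStruct L A O) (φ : Set ((ℕ → O) × (ℕ → A))) : Prop :=
  ∃ α : Pref (Set L) A → A,
    ∀ β, G.IsStrat2K β →
      ((fun n => G.obsK ((outcomeGen ({G.init} : Set L) α β).1 n)),
        (outcomeGen ({G.init} : Set L) α β).2) ∈ φ

end GameStruct

/-- `⌈q⌉`, the set of maximal elements of `q`. -/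
def ceil {L : Type} (q : Set (Set L)) : Set (Set L) :=
  {s | s ∈ q ∧ s.Nonempty ∧ ∀ s' ∈ q, ¬ s ⊂ s'}

/-- `q` is an antichain of nonempty subsets of `L`. -/
def IsAC {L : Type} (q : Set (Set L)) : Prop :=
  (∀ s ∈ q, s.Nonempty) ∧ ∀ s ∈ q, ∀ s' ∈ q, ¬ s ⊂ s'

/-- The type of antichains of nonempty subsets of `L`. -/
def ACL (L : Type) : Type := {q : Set (Set L) // IsAC q}

/-- The order `⊑` on antichains. -/
def acle {L : Type} (q q' : ACL L) : Prop := ∀ s ∈ q.1, ∃ s' ∈ q'.1, s ⊆ s'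

theorem ceil_isAC {L : Type} (q : Set (Set L)) : IsAC (ceil q) :=
  ⟨fun _ hs => hs.2.1, fun _ hs s' hs' => hs.2.2 s' hs'.1⟩

/-- The join `q ⊔ q' = ⌈{s | s ∈ q or s ∈ q'}⌉`. -/
def joinOp {L : Type} (q q' : Set (Set L)) : Set (Set L) := ceil (q ∪ q')

/-- The meet `q ⊓ q' = ⌈{s ∩ s' | s ∈ q and s' ∈ q'}⌉`. -/
def meetOp {L : Type} (q q' : Set (Set L)) : Set (Set L) :=
  ceil {t | ∃ s ∈ q, ∃ s' ∈ q', t = s ∩ s'}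

theorem topAC (L : Type) [Nonempty L] : IsAC ({Set.univ} : Set (Set L)) := by
  constructor
  · intro s hs
    rw [Set.mem_singleton_iff] at hs
    subst hs
    exact Set.univ_nonempty
  · intro s hs s' hs'
    rw [Set.mem_singleton_iff] at hs hs'
    subst hs; subst hs'
    exact fun h => absurd h (lt_irrefl _)

theorem botAC (L : Type) : IsAC (∅ : Set (Set L)) :=
  ⟨fun s hs => absurd hs (Set.notMem_empty s),
   fun s hs => absurd hs (Set.notMem_empty s)⟩

/-- `q ⊆ 𝓛`, i.e. all members of `q` are nonempty. -/
def NESets {L : Type} (q : Set (Set L)) : Prop := ∀ s ∈ q, s.Nonempty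

/-- `q` is downward closed (within nonempty sets). -/
def DownClosed {L : Type} (q : Set (Set L)) : Prop :=
  ∀ s ∈ q, ∀ t, t ⊆ s → t.Nonempty → t ∈ q

namespace GameStruct

variable {L A O : Type}

/-- Controllable predecessor operator on `2^𝓛` (w.r.t. `Gᴷ`). -/
def CPre (G : GameStruct L A O) (q : Set (Set L)) : Set (Set L) :=
  {s | s.Nonempty ∧ ∃ a, ∀ s', G.transK s a s' → s' ∈ q}

end GameStruct

/-- μ-calculus formulas over atomic propositions `O` and variables `V`. -/
inductive MuForm (O V : Type) : Type where
  | atom : O → MuForm O V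
  | var : V → MuForm O V
  | or : MuForm O V → MuForm O V → MuForm O V
  | and : MuForm O V → MuForm O V → MuForm O V
  | pre : MuForm O V → MuForm O V
  | mu : V → MuForm O V → MuForm O V
  | nu : V → MuForm O V → MuForm O V

/-- Semantics of μ-calculus formulas in the lattice of subsets `S = 2^𝓛`. -/
def semS {L A O V : Type} [DecidableEq V] (G : GameStruct L A O) :
    MuForm O V → (V → Set (Set L)) → Set (Set L)
  | .atom o, _ => {s | s.Nonempty ∧ s ⊆ G.obsSet o}
  | .var x, E => E x
  | .or φ ψ, E => semS G φ E ∪ semS G ψ E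
  | .and φ ψ, E => semS G φ E ∩ semS G ψ E
  | .pre φ, E => G.CPre (semS G φ E)
  | .mu x φ, E => ⋂₀ {q | NESets q ∧ q = semS G φ (Function.update E x q)}
  | .nu x φ, E => ⋃₀ {q | NESets q ∧ q = semS G φ (Function.update E x q)}

/-- Greatest lower bound of a family of antichains. -/
def sInfA {L : Type} (Q : Set (Set (Set L))) : Set (Set L) :=
  ceil {s | s.Nonempty ∧ ∀ q ∈ Q, ∃ s' ∈ q, s ⊆ s'}

/-- Least upper bound of a family of antichains. -/
def sSupA {L : Type} (Q : Set (Set (Set L))) : Set (Set L) := ceil (⋃₀ Q)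

/-- The antichain controllable predecessor operator `⌈CPre⌉`. -/
def GameStruct.cpreA {L A O : Type} (G : GameStruct L A O) (q : Set (Set L)) : Set (Set L) :=
  ceil {s | s.Nonempty ∧ ∃ a, ∀ o, ∃ s' ∈ q, G.Post a s ∩ G.obsSet o ⊆ s'}

/-- Semantics of μ-calculus formulas in the lattice of antichains. -/
def semA {L A O V : Type} [DecidableEq V] (G : GameStruct L A O) :
    MuForm O V → (V → Set (Set L)) → Set (Set L)
  | .atom o, _ => {G.obsSet o}
  | .var x, E => E x
  | .or φ ψ, E => joinOp (semA G φ E) (semA G ψ E)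
  | .and φ ψ, E => meetOp (semA G φ E) (semA G ψ E)
  | .pre φ, E => G.cpreA (semA G φ E)
  | .mu x φ, E => sInfA {q | IsAC q ∧ q = semA G φ (Function.update E x q)}
  | .nu x φ, E => sSupA {q | IsAC q ∧ q = semA G φ (Function.update E x q)}

namespace GameStruct

variable {L A O : Type}

/-- Membership in the state set `Q` of `H = Knw(G)`. -/
def inQ (G : GameStruct L A O) (p : Set L × L) : Prop :=
  (∃ o, p.1 ⊆ G.obsSet o) ∧ p.2 ∈ p.1

/-- The transition relation `Δ_H` of `H = Knw(G)` (restricted to `Q`). -/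
def transH (G : GameStruct L A O) (p : Set L × L) (a : A) (p' : Set L × L) : Prop :=
  G.inQ p ∧ G.inQ p' ∧ (∃ o, p'.1 = G.Post a p.1 ∩ G.obsSet o) ∧ G.trans p.2 a p'.2

/-- The map `h : Prefs(G) → Prefs(H)`. -/
noncomputable def hmap (G : GameStruct L A O) : Pref L A → Pref (Set L × L) A
  | .first l => .first (G.K (G.obsSeq (.first l)), l)
  | .snoc ρ a l => .snoc (G.hmap ρ) a (G.K (G.obsSeq (.snoc ρ a l)), l)

/-- Prefixes of `H = Knw(G)`. -/
def PrefsH (G : GameStruct L A O) : Set (Pref (Set L × L) A) :=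
  {ρ | ρ.start = ({G.init}, G.init) ∧ Pref.Steps G.transH ρ}

end GameStruct

/-- Equivalence `≈` of prefixes of `H`. -/
def prefEquiv {L A : Type} : Pref (Set L × L) A → Pref (Set L × L) A → Prop
  | .first q, .first q' => q.1 = q'.1
  | .snoc ρ a q, .snoc ρ' a' q' => prefEquiv ρ ρ' ∧ a = a' ∧ q.1 = q'.1
  | _, _ => False

/-- Randomized Player-1 strategy (each value is a probability distribution). -/
def IsP1Rand {S A : Type} (α : Pref S A → A → ℝ≥0∞) : Prop := ∀ ρ, (∑' a, α ρ a) = 1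

namespace GameStruct

variable {L A O : Type}

/-- Observation-based randomized Player-1 strategy in `G`. -/
def ObsBasedR (G : GameStruct L A O) (α : Pref L A → A → ℝ≥0∞) : Prop :=
  ∀ ρ ∈ G.Prefs, ∀ ρ' ∈ G.Prefs, G.obsSeq ρ = G.obsSeq ρ' → α ρ = α ρ'

/-- Equivalence-preserving randomized Player-1 strategy in `H` (on `Prefs(H)`). -/
def EqPres (G : GameStruct L A O) (α : Pref (Set L × L) A → A → ℝ≥0∞) : Prop :=
  ∀ ρ ∈ G.PrefsH, ∀ ρ' ∈ G.PrefsH, prefEquiv ρ ρ' → α ρ = α ρ'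

/-- Equivalence-preserving randomized Player-1 strategy in `H` (on all valid
prefixes of `H`, from arbitrary start states). -/
def EqPres' (G : GameStruct L A O) (α : Pref (Set L × L) A → A → ℝ≥0∞) : Prop :=
  ∀ ρ ρ' : Pref (Set L × L) A, Pref.Steps G.transH ρ → Pref.Steps G.transH ρ' →
    prefEquiv ρ ρ' → α ρ = α ρ'

/-- Randomized Player-2 strategy in `G` (validity). -/
def IsP2RandG (G : GameStruct L A O) (β : Pref L A → A → L → ℝ≥0∞) : Prop :=
  ∀ ρ a, (∑' l, β ρ a l) = 1 ∧ ∀ l, β ρ a l ≠ 0 → G.trans ρ.last a l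

/-- Randomized Player-2 strategy in `H` (validity). -/
def IsP2RandH (G : GameStruct L A O)
    (β : Pref (Set L × L) A → A → (Set L × L) → ℝ≥0∞) : Prop :=
  ∀ ρ a, G.inQ (Pref.last ρ) →
    (∑' q, β ρ a q) = 1 ∧ ∀ q, β ρ a q ≠ 0 → G.transH ρ.last a q

end GameStruct

/-- `ḡ` on Player-1 strategies. -/
noncomputable def gbar1 {L A O : Type} (G : GameStruct L A O)
    (αH : Pref (Set L × L) A → A → ℝ≥0∞) : Pref L A → A → ℝ≥0∞ :=
  fun ρ => αH (G.hmap ρ)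

/-- The projection `h⁻¹ : Prefs(H) → Prefs(G)`. -/
def projH {L A : Type} : Pref (Set L × L) A → Pref L A := Pref.map Prod.snd id

/-- `h̄` on Player-1 strategies. -/
def hbar1 {L A : Type} (αG : Pref L A → A → ℝ≥0∞) :
    Pref (Set L × L) A → A → ℝ≥0∞ := fun ρ => αG (projH ρ)

/-- `ḡ` on Player-2 strategies: `ḡ(β_H)(ρ,a)(l') = β_H(h(ρ),a)(s',l')` for the unique
`s'` with `((K(γ⁻¹(ρ)), Last ρ), a, (s',l')) ∈ Δ_H`, and `0` if there is none. -/
noncomputable def GameStruct.gbar2 {L A O : Type} (G : GameStruct L A O)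
    (βH : Pref (Set L × L) A → A → (Set L × L) → ℝ≥0∞) : Pref L A → A → L → ℝ≥0∞ :=
  fun ρ a l' =>
    ∑' s' : {s' : Set L // G.transH (G.K (G.obsSeq ρ), ρ.last) a (s', l')},
      βH (G.hmap ρ) a (s'.1, l')

open Classical in
/-- `h̄` on Player-2 strategies. -/
noncomputable def GameStruct.hbar2 {L A O : Type} (G : GameStruct L A O)
    (βG : Pref L A → A → L → ℝ≥0∞) :
    Pref (Set L × L) A → A → (Set L × L) → ℝ≥0∞ :=
  fun ρ a q => if G.transH ρ.last a q then βG (projH ρ) a q.2 else 0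

open Classical in
/-- The probability of the cone of a prefix under a pair of randomized
strategies, starting from `s0`. -/
noncomputable def conePr {S A : Type} (s0 : S)
    (α : Pref S A → A → ℝ≥0∞) (β : Pref S A → A → S → ℝ≥0∞) : Pref S A → ℝ≥0∞
  | .first s => if s = s0 then 1 else 0
  | .snoc ρ a s => conePr s0 α β ρ * α ρ a * β ρ a s

namespace GameStruct

variable {L A O : Type}

lemma mem_obsOf' (G : GameStruct L A O) (l : L) : l ∈ G.obsSet (G.obsOf l) :=
  (G.obs_cover l).choose_spec

lemma obsOf_eq' (G : GameStruct L A O) {l : L} {o : O} (h : l ∈ G.obsSet o) :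
    G.obsOf l = o := G.obs_disjoint _ _ _ (G.mem_obsOf' l) h

lemma projH_hmap (G : GameStruct L A O) (ρ : Pref L A) : projH (G.hmap ρ) = ρ := by
  induction ρ with
  | first l => rfl
  | snoc ρ a l ih =>
    show Pref.snoc (projH (G.hmap ρ)) a l = Pref.snoc ρ a l
    rw [ih]

lemma hmap_last' (G : GameStruct L A O) (ρ : Pref L A) :
    (G.hmap ρ).last = (G.K (G.obsSeq ρ), ρ.last) := by cases ρ <;> rfl

lemma prefs_of_snoc (G : GameStruct L A O) {ρ : Pref L A} {a : A} {l : L}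
    (h : Pref.snoc ρ a l ∈ G.Prefs) : ρ ∈ G.Prefs ∧ G.trans ρ.last a l :=
  ⟨⟨h.1, h.2.1⟩, h.2.2⟩

lemma mem_K_self (G : GameStruct L A O) {ρ : Pref L A} (h : ρ ∈ G.Prefs) :
    ρ.last ∈ G.K (G.obsSeq ρ) := ⟨ρ, h, rfl, rfl⟩

lemma K_snoc' (G : GameStruct L A O) (τ : Pref O A) (a : A) (o : O) :
    G.K (.snoc τ a o) = G.Post a (G.K τ) ∩ G.obsSet o := by
  ext l'
  constructor
  · rintro ⟨ρ, hρ, hobs, rfl⟩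
    cases ρ with
    | first l =>
      exact absurd hobs (by simp [GameStruct.obsSeq, Pref.map])
    | snoc ρ' a' l'' =>
      have hobs' : Pref.snoc (G.obsSeq ρ') a' (G.obsOf l'') = Pref.snoc τ a o := hobs
      injection hobs' with h1 h2 h3
      obtain ⟨hρ', htr⟩ := G.prefs_of_snoc hρ
      subst h2
      exact ⟨⟨ρ'.last, ⟨ρ', hρ', h1, rfl⟩, htr⟩, h3 ▸ G.mem_obsOf' l''⟩
  · rintro ⟨⟨m, ⟨ρ', hρ', hτ, rfl⟩, htr⟩, hmem⟩
    refine ⟨.snoc ρ' a l', ⟨hρ'.1, hρ'.2, htr⟩, ?_, rfl⟩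
    show Pref.snoc (G.obsSeq ρ') a (G.obsOf l') = Pref.snoc τ a o
    rw [hτ, G.obsOf_eq' hmem]

lemma K_first' (G : GameStruct L A O) :
    G.K (.first (G.obsOf G.init)) = {G.init} := by
  ext l'
  constructor
  · rintro ⟨ρ, hρ, hobs, rfl⟩
    cases ρ with
    | first l => exact hρ.1
    | snoc ρ' a' l'' => exact absurd hobs (by simp [GameStruct.obsSeq, Pref.map])
  · rintro rfl
    exact ⟨.first G.init, ⟨rfl, trivial⟩, rfl, rfl⟩

lemma K_subset' (G : GameStruct L A O) (τ : Pref O A) :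
    ∃ o, G.K τ ⊆ G.obsSet o := by
  cases τ with
  | first o =>
    refine ⟨o, ?_⟩
    rintro l' ⟨ρ, hρ, hobs, rfl⟩
    cases ρ with
    | first l =>
      have hobs' : Pref.first (G.obsOf l) = Pref.first o := hobs
      injection hobs' with h1
      exact h1 ▸ G.mem_obsOf' l
    | snoc ρ' a' l'' => exact absurd hobs (by simp [GameStruct.obsSeq, Pref.map])
  | snoc τ a o =>
    exact ⟨o, by rw [G.K_snoc']; exact Set.inter_subset_right⟩

lemma hmap_mem_prefsH (G : GameStruct L A O) : ∀ ρ ∈ G.Prefs, G.hmap ρ ∈ G.PrefsH := by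
  intro ρ hρ
  induction ρ with
  | first l =>
    have hl : l = G.init := hρ.1
    subst hl
    refine ⟨?_, trivial⟩
    show (G.K (G.obsSeq (.first G.init)), G.init) = ({G.init}, G.init)
    rw [show G.obsSeq (.first G.init) = .first (G.obsOf G.init) from rfl, G.K_first']
  | snoc ρ a l ih =>
    obtain ⟨hρ', htr⟩ := G.prefs_of_snoc hρ
    have hH := ih hρ'
    refine ⟨hH.1, hH.2, ?_⟩
    rw [G.hmap_last']
    refine ⟨⟨G.K_subset' _, G.mem_K_self hρ'⟩,
      ⟨G.K_subset' _, G.mem_K_self hρ⟩, ⟨G.obsOf l, ?_⟩, htr⟩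
    show G.K (.snoc (G.obsSeq ρ) a (G.obsOf l)) = _
    rw [G.K_snoc']

lemma hmap_surj (G : GameStruct L A O) :
    ∀ π ∈ G.PrefsH, ∃ ρ ∈ G.Prefs, G.hmap ρ = π := by
  intro π hπ
  induction π with
  | first q =>
    have hq : q = ({G.init}, G.init) := hπ.1
    subst hq
    refine ⟨.first G.init, ⟨rfl, trivial⟩, ?_⟩
    show Pref.first (G.K (G.obsSeq (.first G.init)), G.init) = _
    rw [show G.obsSeq (.first G.init) = .first (G.obsOf G.init) from rfl, G.K_first']
  | snoc π a q ih =>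
    obtain ⟨hπ', htr⟩ : π ∈ G.PrefsH ∧ G.transH π.last a q := ⟨⟨hπ.1, hπ.2.1⟩, hπ.2.2⟩
    obtain ⟨ρ, hρ, hh⟩ := ih hπ'
    have hl : π.last = (G.K (G.obsSeq ρ), ρ.last) := by rw [← hh, G.hmap_last']
    have htrans : G.trans ρ.last a q.2 := by
      have := htr.2.2.2; rw [hl] at this; exact this
    obtain ⟨o, ho⟩ := htr.2.2.1
    have hq2 : q.2 ∈ q.1 := htr.2.1.2
    have hoq : G.obsOf q.2 = o := by
      refine G.obsOf_eq' ?_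
      rw [ho] at hq2; exact hq2.2
    have hK : G.K (G.obsSeq (.snoc ρ a q.2)) = q.1 := by
      show G.K (.snoc (G.obsSeq ρ) a (G.obsOf q.2)) = q.1
      rw [G.K_snoc', hoq, ho, hl]
    refine ⟨.snoc ρ a q.2, ⟨hρ.1, hρ.2, htrans⟩, ?_⟩
    show Pref.snoc (G.hmap ρ) a (G.K (G.obsSeq (.snoc ρ a q.2)), q.2) = Pref.snoc π a q
    rw [hh, hK]

end GameStruct

section Theorems

variable {L A O V : Type}

theorem stmt_13 [Finite L] [Finite A] [Finite O] (G : GameStruct L A O) :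
    Set.BijOn G.hmap G.Prefs G.PrefsH := by
  refine ⟨fun ρ hρ => G.hmap_mem_prefsH ρ hρ, ?_, ?_⟩
  · intro ρ _ ρ' _ h
    rw [← G.projH_hmap ρ, ← G.projH_hmap ρ', h]
  · intro π hπ
    obtain ⟨ρ, hρ, hh⟩ := G.hmap_surj π hπ
    exact ⟨ρ, hρ, hh⟩

end Theorems
end

section
/- Let G be a game structure of imperfect information, H = Knw(G), and h : Prefs(G) → Prefs(H) the prefix map. For every ρ_G ∈ Prefs(G), every observation-based randomized Player-1 strategy α_G in G, and every randomized Player-2 strategy β_G in G, one has Pr_{l0}^{α_G,β_G}(Cone(ρ_G)) = Pr_{q0}^{h̄(α_G),h̄(β_G)}(Cone(h(ρ_G))). -/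
open scoped ENNReal

section Theorems

variable {L A O V : Type}

lemma Pref.last_map {L' A' : Type} (f : L → L') (g : A → A') (ρ : Pref L A) :
    (ρ.map f g).last = f ρ.last := by
  cases ρ <;> rfl

lemma GameStruct.mem_obsOf (G : GameStruct L A O) (l : L) :
    l ∈ G.obsSet (G.obsOf l) := (G.obs_cover l).choose_spec

lemma GameStruct.obsOf_eq (G : GameStruct L A O) {l : L} {o : O}
    (h : l ∈ G.obsSet o) : G.obsOf l = o :=
  G.obs_disjoint _ _ l (G.mem_obsOf l) h

lemma GameStruct.obsSeq_last (G : GameStruct L A O) (ρ : Pref L A) :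
    (G.obsSeq ρ).last = G.obsOf ρ.last := Pref.last_map _ _ ρ

lemma projH_hmap (G : GameStruct L A O) (ρ : Pref L A) :
    projH (G.hmap ρ) = ρ := by
  induction ρ with
  | first l => rfl
  | snoc ρ a l ih => simp [GameStruct.hmap, projH, Pref.map] at *; exact ih

lemma GameStruct.hmap_last (G : GameStruct L A O) (ρ : Pref L A) :
    (G.hmap ρ).last = (G.K (G.obsSeq ρ), ρ.last) := by
  cases ρ <;> rfl

lemma GameStruct.last_mem_K (G : GameStruct L A O) {ρ : Pref L A}
    (hρ : ρ ∈ G.Prefs) : ρ.last ∈ G.K (G.obsSeq ρ) := ⟨ρ, hρ, rfl, rfl⟩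

lemma GameStruct.K_subset (G : GameStruct L A O) (ρ : Pref L A) :
    G.K (G.obsSeq ρ) ⊆ G.obsSet (G.obsOf ρ.last) := by
  rintro l' ⟨ρ', _, hobs, rfl⟩
  have h : G.obsOf ρ'.last = G.obsOf ρ.last := by
    have := congrArg Pref.last hobs
    rwa [G.obsSeq_last, G.obsSeq_last] at this
  rw [← h]; exact G.mem_obsOf _

lemma GameStruct.K_first (G : GameStruct L A O) :
    G.K (G.obsSeq (.first G.init : Pref L A)) = {G.init} := by
  ext l
  constructor
  · rintro ⟨ρ', ⟨hstart, _⟩, hobs, rfl⟩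
    cases ρ' with
    | first l'' => exact hstart
    | snoc ρ'' a l'' => exact absurd hobs (by simp [GameStruct.obsSeq, Pref.map])
  · rintro rfl
    refine ⟨.first G.init, ⟨rfl, ?_⟩, rfl, rfl⟩
    trivial

lemma GameStruct.K_snoc (G : GameStruct L A O) {ρ : Pref L A}
    (hρ : ρ ∈ G.Prefs) (a : A) (l : L) :
    G.K (G.obsSeq (.snoc ρ a l)) =
      G.Post a (G.K (G.obsSeq ρ)) ∩ G.obsSet (G.obsOf l) := by
  ext l'
  constructor
  · rintro ⟨ρ', hρ', hobs, rfl⟩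
    cases ρ' with
    | first _ => exact absurd hobs (by simp [GameStruct.obsSeq, Pref.map])
    | snoc ρ'' a'' l'' =>
      simp only [GameStruct.obsSeq, Pref.map, Pref.snoc.injEq] at hobs
      obtain ⟨hobs1, rfl, hobs3⟩ := hobs
      refine ⟨⟨ρ''.last, ⟨ρ'', ⟨hρ'.1, hρ'.2.1⟩, hobs1, rfl⟩, hρ'.2.2⟩, ?_⟩
      simp only [Pref.last]
      rw [← hobs3]; exact G.mem_obsOf _
  · rintro ⟨⟨m, ⟨ρ'', hρ'', hobs, rfl⟩, htr⟩, hmem⟩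
    refine ⟨.snoc ρ'' a l', ⟨hρ''.1, hρ''.2, htr⟩, ?_, rfl⟩
    simp only [GameStruct.obsSeq, Pref.map, Pref.snoc.injEq]
    exact ⟨hobs, trivial, G.obsOf_eq hmem⟩

lemma GameStruct.transH_of (G : GameStruct L A O) {ρ : Pref L A} {a : A} {l : L}
    (hρ : ρ ∈ G.Prefs) (ht : G.trans ρ.last a l) :
    G.transH (G.K (G.obsSeq ρ), ρ.last) a (G.K (G.obsSeq (.snoc ρ a l)), l) := by
  have hsnoc : (.snoc ρ a l : Pref L A) ∈ G.Prefs := ⟨hρ.1, hρ.2, ht⟩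
  refine ⟨⟨⟨G.obsOf ρ.last, G.K_subset ρ⟩, G.last_mem_K hρ⟩,
    ⟨⟨G.obsOf l, ?_⟩, G.last_mem_K hsnoc⟩, ⟨G.obsOf l, G.K_snoc hρ a l⟩, ht⟩
  have := G.K_subset (.snoc ρ a l)
  simpa [Pref.last] using this

theorem stmt_18 [Finite L] [Finite A] [Finite O] (G : GameStruct L A O)
    (ρG : Pref L A) (hρ : ρG ∈ G.Prefs)
    (αG : Pref L A → A → ℝ≥0∞)
    (hα1 : IsP1Rand αG) (hα2 : G.ObsBasedR αG)
    (βG : Pref L A → A → L → ℝ≥0∞) (hβ : G.IsP2RandG βG) :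
    conePr G.init αG βG ρG
      = conePr (({G.init}, G.init) : Set L × L) (hbar1 αG) (G.hbar2 βG) (G.hmap ρG) := by
  induction ρG with
  | first l =>
    obtain ⟨hstart, -⟩ := hρ
    have hl : l = G.init := hstart
    subst hl
    simp [conePr, GameStruct.hmap, GameStruct.K_first]
  | snoc ρ a l ih =>
    obtain ⟨hstart, hsteps, ht⟩ := hρ
    have hρ' : ρ ∈ G.Prefs := ⟨hstart, hsteps⟩
    have ihe := ih hρ'
    simp only [conePr, GameStruct.hmap]
    rw [← ihe, hbar1, projH_hmap, GameStruct.hbar2, projH_hmap, G.hmap_last,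
      if_pos (G.transH_of hρ' ht)]

end Theorems
end
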